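/- Let $r \ge 25$, $\delta = 1/(10^4 r^{3/2})$, and $n \ge 10^4 r^3$. Let $G$ be a graph on $n$ vertices with $\delta(G) \ge (1-\delta)n$. Then $\sum_{x \in V(G)} \sum_{y \in N(x)} |N^c(x) \cap N^c(y)| \, k_{r-3} \le n^2 k_{r-2}/(10^5 r^2)$, where $N^c(v)$ denotes the set of non-neighbours of $v$ (including $v$) and $k_s$ the number of $s$-cliques of $G$. -/

import Mathlib

/-!
Every vertex has at most `D = n - δ(G) ≤ n/(10⁴r^{3/2})` non-neighbours. Swapping the order of
summation, the inner sum at `x` is at most `∑_{z ∈ N^c(x)} |N^c(z)| ≤ D²`, so the double sum is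
at most `nD² ≤ n³/(10⁸r³)`. An `(r-3)`-clique has at least `n - (r-3)D ≥ n/2` common neighbours,
and each `(r-2)`-clique contains only `r-2` cliques of size `r-3`, so double counting gives
`k_{r-3} ≤ 2r k_{r-2}/n`; the product is at most `2n²k_{r-2}/(10⁸r²)`.
-/

open Finset

namespace SimpleGraph

variable {V : Type*} [Fintype V] (G : SimpleGraph V) [DecidableRel G.Adj]

/-- The paper's `N^c(v)`; it contains `v`. -/
def nonNeighborFinset (v : V) : Finset V := {u | ¬ G.Adj v u}

@[simp]
lemma mem_nonNeighborFinset {v u : V} : u ∈ G.nonNeighborFinset v ↔ ¬ G.Adj v u := by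
  simp [nonNeighborFinset]

lemma card_nonNeighborFinset_add_degree (v : V) :
    #(G.nonNeighborFinset v) + G.degree v = Fintype.card V := by
  rw [← card_neighborFinset_eq_degree, neighborFinset_eq_filter, add_comm]
  exact card_filter_add_card_filter_not _

lemma minDegree_le_card : G.minDegree ≤ Fintype.card V := by
  cases isEmpty_or_nonempty V
  · simp [minDegree_of_subsingleton]
  · exact G.minDegree_lt_card.le

lemma card_nonNeighborFinset_le (v : V) :
    #(G.nonNeighborFinset v) ≤ Fintype.card V - G.minDegree := by
  have := G.card_nonNeighborFinset_add_degree v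
  have := G.minDegree_le_degree v
  omega

variable {G} [DecidableEq V] {D : ℕ}

lemma sum_card_inter_nonNeighborFinset_le (s A : Finset V) :
    ∑ y ∈ s, #(A ∩ G.nonNeighborFinset y) ≤ ∑ z ∈ A, #(G.nonNeighborFinset z) :=
  calc ∑ y ∈ s, #(A ∩ G.nonNeighborFinset y)
      = ∑ y ∈ s, #(A.bipartiteAbove (fun y z ↦ ¬ G.Adj y z) y) := by
        congr! 2 with y; ext z; simp
    _ = ∑ z ∈ A, #(s.bipartiteBelow (fun y z ↦ ¬ G.Adj y z) z) :=
        sum_card_bipartiteAbove_eq_sum_card_bipartiteBelow _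
    _ ≤ ∑ z ∈ A, #(G.nonNeighborFinset z) :=
        sum_le_sum fun z _ ↦ card_le_card fun y hy ↦ by
          simp only [mem_bipartiteBelow, mem_nonNeighborFinset] at hy ⊢
          exact fun h ↦ hy.2 h.symm

lemma sum_sum_card_inter_nonNeighborFinset_le (hD : ∀ v, #(G.nonNeighborFinset v) ≤ D) :
    ∑ x, ∑ y ∈ G.neighborFinset x, #(G.nonNeighborFinset x ∩ G.nonNeighborFinset y)
      ≤ Fintype.card V * D ^ 2 := by
  rw [sq, ← smul_eq_mul, ← card_univ]
  refine sum_le_card_nsmul _ _ _ fun x _ ↦ ?_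
  calc _ ≤ ∑ z ∈ G.nonNeighborFinset x, #(G.nonNeighborFinset z) :=
        sum_card_inter_nonNeighborFinset_le _ _
    _ ≤ #(G.nonNeighborFinset x) * D := sum_le_card_nsmul _ _ _ fun z _ ↦ hD z
    _ ≤ D * D := Nat.mul_le_mul_right D (hD x)

lemma card_sub_le_card_commonNeighbors (hD : ∀ v, #(G.nonNeighborFinset v) ≤ D)
    (K : Finset V) : Fintype.card V - #K * D ≤ #{v | ∀ u ∈ K, G.Adj u v} := by
  have hcover : ({v | ¬ ∀ u ∈ K, G.Adj u v} : Finset V) ⊆ K.biUnion G.nonNeighborFinset :=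
    fun v hv ↦ by simpa using hv
  have hsplit := card_filter_add_card_filter_not (s := univ) (fun v ↦ ∀ u ∈ K, G.Adj u v)
  have hmissed := (card_le_card hcover).trans (card_biUnion_le_card_mul K _ D fun u _ ↦ hD u)
  rw [card_univ] at hsplit
  omega

lemma card_cliqueFinset_mul_le {s m : ℕ}
    (hm : ∀ K ∈ G.cliqueFinset s, m ≤ #{v | ∀ u ∈ K, G.Adj u v}) :
    #(G.cliqueFinset s) * m ≤ #(G.cliqueFinset (s + 1)) * (s + 1) := by
  refine card_mul_le_card_mul (· ⊆ ·) (fun K hK ↦ ?_) (fun L hL ↦ ?_)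
  · have hKclique := mem_cliqueFinset_iff.1 hK
    have hnotMem : ∀ v ∈ ({v | ∀ u ∈ K, G.Adj u v} : Finset V), v ∉ K :=
      fun v hv hvK ↦ G.loopless.irrefl v ((mem_filter.1 hv).2 v hvK)
    refine (hm K hK).trans (card_le_card_of_injOn (insert · K) ?_ ?_)
    · intro v hv
      simp only [mem_coe, mem_filter, mem_univ, true_and] at hv
      simp only [mem_coe, mem_bipartiteAbove, mem_cliqueFinset_iff]
      exact ⟨hKclique.insert fun u hu ↦ (hv u hu).symm, subset_insert _ _⟩
    · intro a ha b _ hab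
      exact (insert_inj (hnotMem a ha)).1 hab
  · rw [mem_cliqueFinset_iff] at hL
    calc #((G.cliqueFinset s).bipartiteBelow (· ⊆ ·) L) ≤ #(L.powersetCard s) :=
          card_le_card fun K hK ↦ by
            simp only [mem_bipartiteBelow, mem_cliqueFinset_iff] at hK
            exact mem_powersetCard.2 ⟨hK.2, hK.1.card_eq⟩
      _ = s + 1 := by rw [card_powersetCard, hL.card_eq, Nat.choose_succ_self_right]

lemma card_cliqueFinset_mul_card_sub_le (hD : ∀ v, #(G.nonNeighborFinset v) ≤ D) (s : ℕ) :
    (#(G.cliqueFinset s) : ℝ) * (Fintype.card V - s * D)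
      ≤ #(G.cliqueFinset (s + 1)) * (s + 1) := by
  have hclique := card_cliqueFinset_mul_le (G := G) (s := s) (m := Fintype.card V - s * D)
    fun K hK ↦ by
      rw [← (mem_cliqueFinset_iff.1 hK).card_eq]
      exact card_sub_le_card_commonNeighbors hD K
  have hsub : (Fintype.card V : ℝ) - s * D ≤ ((Fintype.card V - s * D : ℕ) : ℝ) := by
    rw [sub_le_iff_le_add]; exact_mod_cast le_tsub_add
  calc _ ≤ (#(G.cliqueFinset s) : ℝ) * ((Fintype.card V - s * D : ℕ) : ℝ) := by gcongr
    _ ≤ _ := by exact_mod_cast hclique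

end SimpleGraph

lemma mul_le_of_clique_ratio {n D S k k' r s : ℝ} (hn : 0 ≤ n) (hD : 0 ≤ D) (hk : 0 ≤ k)
    (hs : 0 ≤ s) (hsr : s + 1 ≤ r) (hDsq : D ^ 2 ≤ n ^ 2 / (10 ^ 8 * r ^ 3))
    (hS : S ≤ n * D ^ 2) (hkk' : k * (n - s * D) ≤ k' * (s + 1)) :
    S * k ≤ n ^ 2 * k' / (10 ^ 5 * r ^ 2) := by
  have hr : 1 ≤ r := by linarith
  have hsD : s * D ≤ n / 2 := by
    refine (pow_le_pow_iff_left₀ (by positivity) (by positivity) two_ne_zero).1 ?_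
    calc (s * D) ^ 2 ≤ r ^ 2 * (n ^ 2 / (10 ^ 8 * r ^ 3)) := by
          rw [mul_pow]; gcongr; linarith
      _ = n ^ 2 / (10 ^ 8 * r) := by field_simp
      _ ≤ (n / 2) ^ 2 := by
          rw [div_pow, div_le_div_iff₀ (by positivity) (by norm_num)]; nlinarith
  have hkn : k * (n / 2) ≤ k' * (s + 1) :=
    (mul_le_mul_of_nonneg_left (by linarith) hk).trans hkk'
  have hk' : 0 ≤ k' := nonneg_of_mul_nonneg_left ((by positivity : 0 ≤ k * (n / 2)).trans hkn)
    (by linarith)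
  have hkr : k' * (s + 1) ≤ k' * r := by gcongr
  calc S * k ≤ n * (n ^ 2 / (10 ^ 8 * r ^ 3)) * k := by gcongr; exact hS.trans (by gcongr)
    _ = n ^ 2 / (10 ^ 8 * r ^ 3) * (k * n) := by ring
    _ ≤ n ^ 2 / (10 ^ 8 * r ^ 3) * (2 * r * k') := by
        gcongr n ^ 2 / (10 ^ 8 * r ^ 3) * ?_; linarith
    _ = n ^ 2 * k' / (5 * 10 ^ 7 * r ^ 2) := by field_simp; ring
    _ ≤ n ^ 2 * k' / (10 ^ 5 * r ^ 2) := by gcongr; norm_num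

theorem stmt_19_general {V : Type*} [Fintype V] [DecidableEq V]
    (r : ℕ) (hr : 25 ≤ r) (G : SimpleGraph V) [DecidableRel G.Adj]
    (hmin : (1 - 1/(10^4*(r:ℝ)^((3:ℝ)/2))) * (Fintype.card V : ℝ) ≤ (G.minDegree : ℝ)) :
    ∑ x : V, ∑ y ∈ G.neighborFinset x,
      (((univ.filter (fun u => ¬ G.Adj x u)) ∩ (univ.filter (fun u => ¬ G.Adj y u))).card : ℝ)
        * ((G.cliqueFinset (r-3)).card : ℝ)
      ≤ (Fintype.card V : ℝ)^2 * ((G.cliqueFinset (r-2)).card : ℝ) / (10^5*(r:ℝ)^2) := by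
  change ∑ x, ∑ y ∈ G.neighborFinset x,
    (#(G.nonNeighborFinset x ∩ G.nonNeighborFinset y) : ℝ) * _ ≤ _
  set D := Fintype.card V - G.minDegree
  have hD : ∀ v, #(G.nonNeighborFinset v) ≤ D := G.card_nonNeighborFinset_le
  have hDsq : (D : ℝ) ^ 2 ≤ (Fintype.card V : ℝ) ^ 2 / (10 ^ 8 * (r : ℝ) ^ 3) := by
    have hrpow : ((r : ℝ) ^ ((3 : ℝ) / 2)) ^ 2 = r ^ 3 := by
      rw [← Real.rpow_natCast, ← Real.rpow_mul (Nat.cast_nonneg r)]; norm_num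
    have hDle : (D : ℝ) ≤ 1 / (10 ^ 4 * r ^ ((3 : ℝ) / 2)) * Fintype.card V := by
      rw [Nat.cast_sub G.minDegree_le_card]; linarith
    calc (D : ℝ) ^ 2 ≤ (1 / (10 ^ 4 * r ^ ((3 : ℝ) / 2)) * Fintype.card V) ^ 2 := by gcongr
      _ = _ := by rw [mul_pow, div_pow, mul_pow, hrpow]; ring
  have hS := SimpleGraph.sum_sum_card_inter_nonNeighborFinset_le hD
  have hk := SimpleGraph.card_cliqueFinset_mul_card_sub_le hD (r - 3)
  rw [show r - 3 + 1 = r - 2 by omega] at hk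
  simp_rw [← sum_mul]
  refine mul_le_of_clique_ratio (by positivity) (by positivity) (by positivity) (by positivity)
    ?_ hDsq (by exact_mod_cast hS) hk
  exact_mod_cast (show r - 3 + 1 ≤ r by omega)

/-- Claim 8.5: the common-non-neighbourhood error term is small. -/
theorem stmt_19 {V : Type*} [Fintype V] [DecidableEq V]
    (r : ℕ) (hr : 25 ≤ r) (G : SimpleGraph V) [DecidableRel G.Adj]
    (hn : 10^4 * r^3 ≤ Fintype.card V)
    (hmin : (1 - 1/(10^4*(r:ℝ)^((3:ℝ)/2))) * (Fintype.card V : ℝ) ≤ (G.minDegree : ℝ)) :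
    ∑ x : V, ∑ y ∈ G.neighborFinset x,
      (((univ.filter (fun u => ¬ G.Adj x u)) ∩ (univ.filter (fun u => ¬ G.Adj y u))).card : ℝ)
        * ((G.cliqueFinset (r-3)).card : ℝ)
      ≤ (Fintype.card V : ℝ)^2 * ((G.cliqueFinset (r-2)).card : ℝ) / (10^5*(r:ℝ)^2) :=
  stmt_19_general r hr G hmin
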